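/- arXiv:2304.05337 — 3 statements merged into one kernel-verified Lean document; each statement's English description precedes it below -/
import Mathlib

section
/- Let g : ℝ → ℝ be a twice-differentiable solution of y'' + (B/x) y' + C y = 0 on ℝ \ {0} with B, C > 0, extended continuously to ℝ. Define f(x) = g(x)² + g'(x)²/C. Then f'(x) = -2B g'(x)²/(Cx) for x ≠ 0; in particular f is nonnegative, nondecreasing on (-∞, 0) and nonincreasing on (0, ∞). -/
/-! Along a solution of `y'' = -a y' - C y`, the restoring terms `± 2 C g g'` cancel in the derivative
of the energy `g² + g'²/C`, leaving only the damping term `-2 a g'²/C`. With `a = B/x` this has the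
sign of `-x`, so the energy rises up to `0` and decays after it. -/

theorem hasDerivAt_sq_add_sq_div_of_hasDerivAt_damped {g g' : ℝ → ℝ} {a C x : ℝ} (hC : C ≠ 0)
    (hg : HasDerivAt g (g' x) x) (hg' : HasDerivAt g' (-a * g' x - C * g x) x) :
    HasDerivAt (fun y => g y ^ 2 + g' y ^ 2 / C) (-2 * a * g' x ^ 2 / C) x :=
  ((hg.pow 2).add ((hg'.pow 2).div_const C)).congr_deriv (by field_simp; ring)

section OpenConvex

variable {D : Set ℝ} {f f' : ℝ → ℝ}

theorem monotoneOn_of_hasDerivAt_nonneg_of_isOpen (hD : Convex ℝ D) (hDo : IsOpen D)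
    (hf : ∀ x ∈ D, HasDerivAt f (f' x) x) (hf' : ∀ x ∈ D, 0 ≤ f' x) : MonotoneOn f D := by
  refine monotoneOn_of_hasDerivWithinAt_nonneg (f' := f') hD
    (fun x hx => (hf x hx).continuousAt.continuousWithinAt) ?_ ?_ <;> rw [hDo.interior_eq]
  exacts [fun x hx => (hf x hx).hasDerivWithinAt, hf']

theorem antitoneOn_of_hasDerivAt_nonpos_of_isOpen (hD : Convex ℝ D) (hDo : IsOpen D)
    (hf : ∀ x ∈ D, HasDerivAt f (f' x) x) (hf' : ∀ x ∈ D, f' x ≤ 0) : AntitoneOn f D := by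
  refine antitoneOn_of_hasDerivWithinAt_nonpos (f' := f') hD
    (fun x hx => (hf x hx).continuousAt.continuousWithinAt) ?_ ?_ <;> rw [hDo.interior_eq]
  exacts [fun x hx => (hf x hx).hasDerivWithinAt, hf']

end OpenConvex

theorem sonin_lid_general (B C : ℝ) (hB : 0 < B) (hC : 0 < C) (g g' : ℝ → ℝ)
    (hg : ∀ x : ℝ, x ≠ 0 → HasDerivAt g (g' x) x)
    (hg' : ∀ x : ℝ, x ≠ 0 → HasDerivAt g' (-(B / x) * g' x - C * g x) x) :
    (∀ x : ℝ, x ≠ 0 →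
        HasDerivAt (fun x => g x ^ 2 + g' x ^ 2 / C) (-2 * B * g' x ^ 2 / (C * x)) x) ∧
      (∀ x : ℝ, 0 ≤ g x ^ 2 + g' x ^ 2 / C) ∧
      MonotoneOn (fun x => g x ^ 2 + g' x ^ 2 / C) (Set.Iio 0) ∧
      AntitoneOn (fun x => g x ^ 2 + g' x ^ 2 / C) (Set.Ioi 0) := by
  have hderiv : ∀ x : ℝ, x ≠ 0 →
      HasDerivAt (fun x => g x ^ 2 + g' x ^ 2 / C) (-2 * B * g' x ^ 2 / (C * x)) x :=
    fun x hx => (hasDerivAt_sq_add_sq_div_of_hasDerivAt_damped hC.ne' (hg x hx)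
      (hg' x hx)).congr_deriv (by field_simp)
  have hdamp : ∀ x, -2 * B * g' x ^ 2 ≤ 0 := fun x =>
    mul_nonpos_of_nonpos_of_nonneg (by linarith) (sq_nonneg _)
  refine ⟨hderiv, fun x => by positivity, ?_, ?_⟩
  · exact monotoneOn_of_hasDerivAt_nonneg_of_isOpen (convex_Iio 0) isOpen_Iio
      (fun x hx => hderiv x hx.ne) fun x hx =>
        div_nonneg_of_nonpos (hdamp x) (mul_neg_of_pos_of_neg hC hx).le
  · exact antitoneOn_of_hasDerivAt_nonpos_of_isOpen (convex_Ioi 0) isOpen_Ioi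
      (fun x hx => hderiv x hx.ne') fun x hx =>
        div_nonpos_of_nonpos_of_nonneg (hdamp x) (mul_pos hC hx).le

theorem sonin_lid (B C : ℝ) (hB : 0 < B) (hC : 0 < C) (g g' : ℝ → ℝ)
    (hgc : Continuous g) (hg'c : Continuous g')
    (hg : ∀ x : ℝ, x ≠ 0 → HasDerivAt g (g' x) x)
    (hg' : ∀ x : ℝ, x ≠ 0 → HasDerivAt g' (-(B / x) * g' x - C * g x) x) :
    (∀ x : ℝ, x ≠ 0 →
        HasDerivAt (fun x => g x ^ 2 + g' x ^ 2 / C) (-2 * B * g' x ^ 2 / (C * x)) x) ∧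
      (∀ x : ℝ, 0 ≤ g x ^ 2 + g' x ^ 2 / C) ∧
      MonotoneOn (fun x => g x ^ 2 + g' x ^ 2 / C) (Set.Iio 0) ∧
      AntitoneOn (fun x => g x ^ 2 + g' x ^ 2 / C) (Set.Ioi 0) :=
  sonin_lid_general B C hB hC g g' hg hg'
end

section
/- Let g(x) = sin(πx)/(πx) and f(x) = g(x)² + g'(x)²/π². Then the Fourier transform of f (with convention f̂(ξ) = ∫ f(x)e^{-2πixξ}dx) equals f̂(ξ) = (2/3)(1-|ξ|)²(|ξ|+2) for |ξ| ≤ 1 and f̂(ξ) = 0 for |ξ| > 1. -/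
open MeasureTheory Real Set FourierTransform

noncomputable def sincPi (x : ℝ) : ℝ :=
  if x = 0 then 1 else Real.sin (Real.pi * x) / (Real.pi * x)

noncomputable def fejerLid (x : ℝ) : ℝ :=
  sincPi x ^ 2 + (deriv sincPi x) ^ 2 / Real.pi ^ 2

/-!
The transform is computed backwards. The profile `P ξ = ⅔ (1 - |ξ|)² (|ξ| + 2)`, cut off at
`|ξ| = 1`, is even, continuous and supported in `[-1, 1]`, so `𝓕 P x = 2 ∫₀¹ P t cos (2π x t) dt`;
on `[0, 1]` the profile is the cubic `⅔ (t³ - 3t + 2)`, and integrating it by parts against the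
cosine gives exactly `fejerLid x` for `x ≠ 0`. As `fejerLid x = O(x⁻²)`, `𝓕 P` is integrable, so
Fourier inversion applies, and since `P` is even, `𝓕 fejerLid = 𝓕 (𝓕⁻ P) = P`.
-/

section EvenFourier

variable {V E : Type*} [NormedAddCommGroup V] [InnerProductSpace ℝ V] [MeasurableSpace V]
  [BorelSpace V] [FiniteDimensional ℝ V] [NormedAddCommGroup E] [NormedSpace ℂ E]

theorem Function.Even.fourierInv_eq_fourier {f : V → E} (hf : Function.Even f) :
    𝓕⁻ f = 𝓕 f := by
  rw [Real.fourierInv_eq_fourier_comp_neg]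
  congr 1
  exact funext hf

theorem Function.Even.fourier {f : V → E} (hf : Function.Even f) : Function.Even (𝓕 f) :=
  fun w => by rw [← Real.fourierInv_eq_fourier_neg, hf.fourierInv_eq_fourier]

end EvenFourier

theorem Function.Even.fourier_ofReal_eq_integral_cos {f : ℝ → ℝ} (hf : Function.Even f)
    (hint : Integrable f) (w : ℝ) :
    𝓕 (fun v => (f v : ℂ)) w = ↑(∫ v, cos (2 * π * v * w) * f v) := by
  set F : ℝ → ℂ := fun v => (f v : ℂ)
  have hF : Integrable F := hint.ofReal
  have hF_even : Function.Even F := hf.left_comp ((↑) : ℝ → ℂ)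
  -- `𝓕⁻ F = 𝓕 F`, and averaging the two kernels `e^{∓2πivw}` leaves `cos (2πvw)`.
  have hsum : 𝓕 F w + 𝓕⁻ F w = ∫ v, ((2 * (cos (2 * π * v * w) * f v) : ℝ) : ℂ) := by
    rw [Real.fourier_eq, Real.fourierInv_eq, ← integral_add
      ((Real.fourierIntegral_convergent_iff w).mpr hF)
      (by simpa using (Real.fourierIntegral_convergent_iff (-w)).mpr hF)]
    refine integral_congr_ae (Filter.Eventually.of_forall fun v => ?_)
    simp only [Circle.smul_def, Real.fourierChar_apply, F]
    push_cast
    rw [smul_eq_mul, smul_eq_mul, ← add_mul, ← mul_assoc, Complex.two_cos, Real.inner_apply]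
    push_cast
    ring_nf
  rw [hF_even.fourierInv_eq_fourier, integral_complex_ofReal, integral_const_mul] at hsum
  push_cast at hsum
  linear_combination hsum / 2

theorem Function.Even.intervalIntegral_neg_eq_two_nsmul {E : Type*} [NormedAddCommGroup E]
    [NormedSpace ℝ E] {f : ℝ → E} (hf : Function.Even f) {a : ℝ}
    (hint : IntervalIntegrable f volume (-a) a) :
    ∫ x in -a..a, f x = 2 • ∫ x in 0..a, f x := by
  have hleft : ∫ x in -a..0, f x = ∫ x in 0..a, f x := by
    simpa [hf _] using (intervalIntegral.integral_comp_neg (a := 0) (b := a) f).symm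
  have hzero : (0 : ℝ) ∈ uIcc (-a) a := by
    rcases le_total 0 a with h | h <;> simp [h]
  rw [← intervalIntegral.integral_add_adjacent_intervals (b := 0), hleft, two_nsmul]
  · exact hint.mono_set (uIcc_subset_uIcc_left hzero)
  · exact hint.mono_set (uIcc_subset_uIcc_right hzero)

theorem integral_cubic_mul_cos {c : ℝ} (hc : c ≠ 0) :
    ∫ t in (0 : ℝ)..1, (t ^ 3 - 3 * t + 2) * cos (c * t)
      = 3 / c ^ 2 - 6 * sin c / c ^ 3 + 6 * (1 - cos c) / c ^ 4 := by
  have hderiv : ∀ t, HasDerivAt (fun u => (u ^ 3 - 3 * u + 2) * sin (c * u) / c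
      + (3 * u ^ 2 - 3) * cos (c * u) / c ^ 2 - 6 * u * sin (c * u) / c ^ 3
      - 6 * cos (c * u) / c ^ 4) ((t ^ 3 - 3 * t + 2) * cos (c * t)) t := by
    intro t
    have hlin : HasDerivAt (fun u => c * u) c t := by simpa using (hasDerivAt_id t).const_mul c
    have hpoly : HasDerivAt (fun u => u ^ 3 - 3 * u + 2) (3 * t ^ 2 - 3) t := by
      simpa using ((hasDerivAt_pow 3 t).sub ((hasDerivAt_id t).const_mul 3)).add_const 2
    have hpoly' : HasDerivAt (fun u => 3 * u ^ 2 - 3) (6 * t) t := by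
      simpa using (((hasDerivAt_pow 2 t).const_mul 3).sub_const 3).congr_deriv (by ring)
    have hid : HasDerivAt (fun u => 6 * u) 6 t := by simpa using (hasDerivAt_id t).const_mul 6
    refine ((((hpoly.mul hlin.sin).div_const c).add ((hpoly'.mul hlin.cos).div_const (c ^ 2))).sub
      ((hid.mul hlin.sin).div_const (c ^ 3))).sub (hlin.cos.const_mul 6 |>.div_const (c ^ 4))
      |>.congr_deriv ?_
    field_simp
    ring
  have hcont : Continuous fun t => (t ^ 3 - 3 * t + 2) * cos (c * t) := by fun_prop
  rw [intervalIntegral.integral_eq_sub_of_hasDerivAt (fun t _ => hderiv t)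
    (hcont.intervalIntegrable 0 1)]
  simp only [mul_one, mul_zero, sin_zero, cos_zero]
  field_simp
  ring

theorem hasDerivAt_sincPi {x : ℝ} (hx : x ≠ 0) :
    HasDerivAt sincPi ((π * x * cos (π * x) - sin (π * x)) / (π * x ^ 2)) x := by
  have hlin : HasDerivAt (fun y : ℝ => π * y) π x := by
    simpa using (hasDerivAt_id x).const_mul π
  have hsinc : (fun y => sin (π * y) / (π * y)) =ᶠ[nhds x] sincPi := by
    filter_upwards [isOpen_ne.mem_nhds hx] with y hy
    simp [sincPi, hy]
  refine ((hlin.sin.div hlin (by positivity)).congr_of_eventuallyEq hsinc.symm).congr_deriv ?_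
  field_simp

theorem fejerLid_of_ne_zero {x : ℝ} (hx : x ≠ 0) :
    fejerLid x = ((π * x) ^ 2 - 2 * (π * x) * sin (π * x) * cos (π * x) + sin (π * x) ^ 2)
      / (π * x) ^ 4 := by
  rw [fejerLid, (hasDerivAt_sincPi hx).deriv, sincPi, if_neg hx]
  have := pi_ne_zero
  field_simp
  linear_combination (π * x) ^ 2 * sin_sq_add_cos_sq (π * x)

theorem fejerLid_eq_integral_cubic_mul_cos {x : ℝ} (hx : x ≠ 0) :
    fejerLid x = 4 / 3 * ∫ t in (0 : ℝ)..1, (t ^ 3 - 3 * t + 2) * cos (2 * (π * x) * t) := by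
  have := pi_ne_zero
  rw [integral_cubic_mul_cos (by positivity), fejerLid_of_ne_zero hx, sin_two_mul, cos_two_mul]
  field_simp
  linear_combination 48 * sin_sq_add_cos_sq (π * x)

theorem abs_fejerLid_le {x : ℝ} (hx : 1 ≤ |x|) : |fejerLid x| ≤ 4 / x ^ 2 := by
  have hx0 : x ≠ 0 := by rintro rfl; norm_num at hx
  set y := π * x
  set s := sin y
  set k := cos y
  have hnum_nonneg : 0 ≤ y ^ 2 - 2 * y * s * k + s ^ 2 := by
    have hsos : y ^ 2 - 2 * y * s * k + s ^ 2 = (y - s * k) ^ 2 + s ^ 4 := by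
      linear_combination (-s ^ 2) * sin_sq_add_cos_sq y
    rw [hsos]
    positivity
  have hy : 1 ≤ |y| := by
    rw [abs_mul, abs_of_pos pi_pos]
    nlinarith [pi_gt_three]
  have hnum_le : y ^ 2 - 2 * y * s * k + s ^ 2 ≤ 4 * y ^ 2 := by
    have hsk : |s * k| ≤ 1 := by
      rw [abs_mul]
      exact mul_le_one₀ (abs_sin_le_one y) (abs_nonneg _) (abs_cos_le_one y)
    have hysk : -|y| ≤ y * (s * k) := by
      have := abs_mul y (s * k) ▸ neg_abs_le (y * (s * k))
      nlinarith [abs_nonneg y, abs_nonneg (s * k)]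
    nlinarith [sq_abs y, sin_sq_le_one y]
  have hxy : x ^ 2 ≤ y ^ 2 := by
    rw [mul_pow]
    exact le_mul_of_one_le_left (sq_nonneg x) (by nlinarith [pi_gt_three])
  rw [fejerLid_of_ne_zero hx0, abs_of_nonneg (by positivity),
    div_le_div_iff₀ (by positivity) (by positivity)]
  calc (y ^ 2 - 2 * y * s * k + s ^ 2) * x ^ 2 ≤ 4 * y ^ 2 * y ^ 2 := by gcongr
    _ = 4 * y ^ 4 := by ring

noncomputable def fejerLidHat (ξ : ℝ) : ℝ :=
  2 / 3 * max (1 - |ξ|) 0 ^ 2 * (|ξ| + 2)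

@[fun_prop]
theorem continuous_fejerLidHat : Continuous fejerLidHat := by
  unfold fejerLidHat
  fun_prop

theorem fejerLidHat_even : Function.Even fejerLidHat := fun ξ => by
  simp [fejerLidHat]

theorem fejerLidHat_ofReal_even : Function.Even fun ξ => (fejerLidHat ξ : ℂ) :=
  fejerLidHat_even.left_comp ((↑) : ℝ → ℂ)

theorem support_fejerLidHat : Function.support fejerLidHat ⊆ Ioo (-1) 1 := by
  intro ξ hξ
  rw [mem_Ioo, ← abs_lt]
  by_contra! h
  exact hξ (by simp [fejerLidHat, max_eq_right (by linarith : 1 - |ξ| ≤ 0)])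

theorem fejerLidHat_of_mem_Icc {t : ℝ} (ht : t ∈ Icc (0 : ℝ) 1) :
    fejerLidHat t = 2 / 3 * (t ^ 3 - 3 * t + 2) := by
  rw [fejerLidHat, abs_of_nonneg ht.1, max_eq_left (by linarith [ht.2])]
  ring

theorem integrable_fejerLidHat : Integrable fejerLidHat :=
  continuous_fejerLidHat.integrable_of_hasCompactSupport <|
    HasCompactSupport.intro isCompact_Icc fun _ hξ =>
      Function.notMem_support.mp fun h => hξ (Ioo_subset_Icc_self (support_fejerLidHat h))

theorem ofReal_fejerLidHat (ξ : ℝ) :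
    (fejerLidHat ξ : ℂ) = if |ξ| ≤ 1 then ((2 / 3 * (1 - |ξ|) ^ 2 * (|ξ| + 2) : ℝ) : ℂ) else 0 := by
  split_ifs with h
  · rw [fejerLidHat, max_eq_left (by linarith)]
  · rw [fejerLidHat, max_eq_right (by linarith)]
    simp

theorem fourier_fejerLidHat {x : ℝ} (hx : x ≠ 0) :
    𝓕 (fun t => (fejerLidHat t : ℂ)) x = fejerLid x := by
  set g : ℝ → ℝ := fun t => cos (2 * π * t * x) * fejerLidHat t
  have hg_even : Function.Even g := fun t => by
    simp only [g, mul_neg, neg_mul, cos_neg, fejerLidHat_even t]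
  have hg_supp : Function.support g ⊆ Ioc (-1) 1 :=
    (Function.support_mul_subset_right _ _).trans (support_fejerLidHat.trans Ioo_subset_Ioc_self)
  have hg_cont : Continuous g := by fun_prop
  rw [fejerLidHat_even.fourier_ofReal_eq_integral_cos integrable_fejerLidHat, Complex.ofReal_inj,
    ← intervalIntegral.integral_eq_integral_of_support_subset hg_supp,
    hg_even.intervalIntegral_neg_eq_two_nsmul (hg_cont.intervalIntegrable _ _), nsmul_eq_mul,
    fejerLid_eq_integral_cubic_mul_cos hx, ← intervalIntegral.integral_const_mul,
    ← intervalIntegral.integral_const_mul]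
  refine intervalIntegral.integral_congr fun t ht => ?_
  rw [uIcc_of_le zero_le_one] at ht
  simp only [g, fejerLidHat_of_mem_Icc ht]
  ring_nf

theorem integrable_fourier_fejerLidHat : Integrable (𝓕 fun t => (fejerLidHat t : ℂ)) := by
  have hcont : Continuous (𝓕 fun t => (fejerLidHat t : ℂ)) :=
    VectorFourier.fourierIntegral_continuous Real.continuous_fourierChar continuous_inner
      integrable_fejerLidHat.ofReal
  have hdecay : (𝓕 fun t => (fejerLidHat t : ℂ)) =O[Filter.atTop] fun x => x ^ (-2 : ℝ) := by
    refine Asymptotics.IsBigO.of_bound 4 ?_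
    filter_upwards [Filter.eventually_ge_atTop (1 : ℝ)] with x hx
    have hx0 : 0 < x := by linarith
    rw [fourier_fejerLidHat hx0.ne', Complex.norm_real, norm_eq_abs,
      norm_of_nonneg (rpow_nonneg hx0.le _), rpow_neg hx0.le, rpow_two, ← div_eq_mul_inv]
    exact abs_fejerLid_le (by rwa [abs_of_pos hx0])
  refine hcont.locallyIntegrable.integrable_of_isBigO_atTop_of_norm_isNegInvariant
    (Filter.Eventually.of_forall fun x => ?_) hdecay
    (integrableAtFilter_rpow_atTop_iff.mpr (by norm_num))
  simp [fejerLidHat_ofReal_even.fourier x]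

theorem fourier_transform_fejer_lid :
    ∀ ξ : ℝ, 𝓕 (fun x : ℝ => (fejerLid x : ℂ)) ξ =
      if |ξ| ≤ 1 then ((2 / 3 * (1 - |ξ|) ^ 2 * (|ξ| + 2) : ℝ) : ℂ) else 0 := by
  intro ξ
  have hae : (fun x : ℝ => (fejerLid x : ℂ)) =ᵐ[volume] 𝓕 fun t => (fejerLidHat t : ℂ) := by
    filter_upwards [compl_mem_ae_iff.mpr (measure_singleton (0 : ℝ))] with x hx
    exact (fourier_fejerLidHat hx).symm
  calc 𝓕 (fun x : ℝ => (fejerLid x : ℂ)) ξ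
      = 𝓕 (𝓕⁻ fun t => (fejerLidHat t : ℂ)) ξ := by
        rw [Real.fourier_congr_ae hae, fejerLidHat_ofReal_even.fourierInv_eq_fourier]
    _ = fejerLidHat ξ := integrable_fejerLidHat.ofReal.fourier_fourierInv_eq
        integrable_fourier_fejerLidHat (by fun_prop)
    _ = _ := ofReal_fejerLidHat ξ
end

section
/- Let f be an even real entire function of exponential type at most 2π with f ∈ L¹(ℝ), f ≥ 0 on ℝ, radially decreasing, f(0) = 1, and suppose f has a zero at z = a + ib with a, b real, a ≠ 0, b ≠ 0. Then H(z) = (a²+b²)² f(z) / (((z-a)²+b²)((z+a)²+b²)) is an entire function, and if |b| ≥ |a| then ∫_{-∞}^{∞} H(x) dx < ∫_{-∞}^{∞} f(x) dx. -/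
open MeasureTheory Real Set Filter Topology

lemma diff_conj_conj (f : ℂ → ℂ) (hd : Differentiable ℂ f) :
    Differentiable ℂ fun z => (starRingEnd ℂ) (f ((starRingEnd ℂ) z)) := by
  intro z
  have hf := (hd ((starRingEnd ℂ) z)).hasDerivAt
  rw [hasDerivAt_iff_tendsto_slope] at hf
  have hconj : Tendsto (starRingEnd ℂ) (𝓝[≠] z) (𝓝[≠] ((starRingEnd ℂ) z)) := by
    apply Tendsto.inf
    · exact (Complex.continuous_conj.tendsto z)
    · exact tendsto_principal_principal.2 fun w hw h =>
        hw (by simpa using congrArg (starRingEnd ℂ) h)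
  have h2 : Tendsto (fun w => (starRingEnd ℂ) (slope f ((starRingEnd ℂ) z) ((starRingEnd ℂ) w)))
      (𝓝[≠] z) (𝓝 ((starRingEnd ℂ) (deriv f ((starRingEnd ℂ) z)))) :=
    ((Complex.continuous_conj.tendsto _).comp (hf.comp hconj))
  have : HasDerivAt (fun z => (starRingEnd ℂ) (f ((starRingEnd ℂ) z)))
      ((starRingEnd ℂ) (deriv f ((starRingEnd ℂ) z))) z := by
    rw [hasDerivAt_iff_tendsto_slope]
    refine h2.congr' ?_
    filter_upwards [self_mem_nhdsWithin] with w hw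
    simp only [slope_def_field]
    rw [map_div₀, map_sub, map_sub, Complex.conj_conj, Complex.conj_conj]
  exact this.differentiableAt

/-- Schwarz reflection: an entire function real on the reals satisfies
`f (conj z) = conj (f z)`. -/
lemma entire_real_conj (f : ℂ → ℂ) (hd : Differentiable ℂ f)
    (hreal : ∀ x : ℝ, (f x).im = 0) (z : ℂ) :
    f ((starRingEnd ℂ) z) = (starRingEnd ℂ) (f z) := by
  set g : ℂ → ℂ := fun z => (starRingEnd ℂ) (f ((starRingEnd ℂ) z)) with hg
  have hdg : Differentiable ℂ g := diff_conj_conj f hd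
  have heq : f = g := by
    apply AnalyticOnNhd.eq_of_frequently_eq
      (Complex.analyticOnNhd_univ_iff_differentiable.2 hd)
      (Complex.analyticOnNhd_univ_iff_differentiable.2 hdg) (z₀ := (0:ℂ))
    have htend : Tendsto (fun n : ℕ => ((1/((n:ℝ)+1) : ℝ) : ℂ)) atTop (𝓝[≠] (0:ℂ)) := by
      apply tendsto_nhdsWithin_of_tendsto_nhds_of_eventually_within
      · have := (Complex.continuous_ofReal.tendsto 0).comp
          tendsto_one_div_add_atTop_nhds_zero_nat
        simpa [Function.comp_def] using this
      · filter_upwards [eventually_ge_atTop 0] with n _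
        simp only [mem_compl_iff, mem_singleton_iff, Complex.ofReal_eq_zero]
        positivity
    refine htend.frequently (Frequently.of_forall fun n => ?_)
    set x : ℝ := 1/((n:ℝ)+1)
    show f x = g x
    rw [hg]
    simp only [Complex.conj_ofReal]
    exact (Complex.conj_eq_iff_im.2 (hreal x)).symm
  calc f ((starRingEnd ℂ) z) = g ((starRingEnd ℂ) z) := by rw [← heq]
    _ = (starRingEnd ℂ) (f z) := by rw [hg]; simp

lemma ds_eq {f : ℂ → ℂ} {c z : ℂ} (h0 : f c = 0) (hz : z ≠ c) :
    dslope f c z = f z / (z - c) := by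
  rw [dslope_of_ne _ hz, slope_def_field, h0, sub_zero]

/-- `f` has exponential type at most `σ`. -/
def ExpTypeAtMost (σ : ℝ) (f : ℂ → ℂ) : Prop :=
  ∀ ε > 0, ∃ C : ℝ, ∀ z : ℂ, ‖f z‖ ≤ C * Real.exp ((σ + ε) * ‖z‖)

theorem zero_quadruple_division (f : ℂ → ℂ) (hd : Differentiable ℂ f)
    (htype : ExpTypeAtMost (2 * Real.pi) f)
    (hreal : ∀ x : ℝ, (f x).im = 0) (heven : ∀ z : ℂ, f (-z) = f z)
    (hint : Integrable (fun x : ℝ => (f x).re))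
    (hpos : ∀ x : ℝ, 0 ≤ (f x).re)
    (hmono : MonotoneOn (fun x : ℝ => (f x).re) (Set.Iio 0))
    (hanti : AntitoneOn (fun x : ℝ => (f x).re) (Set.Ioi 0))
    (hf0 : f 0 = 1) (a b : ℝ) (ha : a ≠ 0) (hb : b ≠ 0)
    (hzero : f ((a : ℂ) + (b : ℂ) * Complex.I) = 0) :
    ∃ G : ℂ → ℂ, Differentiable ℂ G ∧
      (∀ z : ℂ, ((z - (a : ℂ)) ^ 2 + (b : ℂ) ^ 2) * ((z + (a : ℂ)) ^ 2 + (b : ℂ) ^ 2) ≠ 0 →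
        G z = ((a : ℂ) ^ 2 + (b : ℂ) ^ 2) ^ 2 * f z /
          (((z - (a : ℂ)) ^ 2 + (b : ℂ) ^ 2) * ((z + (a : ℂ)) ^ 2 + (b : ℂ) ^ 2))) ∧
      (|a| ≤ |b| → (∫ x : ℝ, (G x).re) < ∫ x : ℝ, (f x).re) := by
  set w1 : ℂ := (a : ℂ) + (b : ℂ) * Complex.I with hw1
  set w2 : ℂ := (a : ℂ) - (b : ℂ) * Complex.I with hw2
  set w3 : ℂ := -(a : ℂ) + (b : ℂ) * Complex.I with hw3
  set w4 : ℂ := -(a : ℂ) - (b : ℂ) * Complex.I with hw4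
  -- zeros at all four points
  have hz2 : f w2 = 0 := by
    have h := entire_real_conj f hd hreal w1
    have : (starRingEnd ℂ) w1 = w2 := by
      rw [hw1, hw2]; simp [Complex.conj_ofReal]; ring
    rw [this] at h
    rw [h, hzero, map_zero]
  have hz3 : f w3 = 0 := by
    have : w3 = -w2 := by rw [hw2, hw3]; ring
    rw [this, heven, hz2]
  have hz4 : f w4 = 0 := by
    have : w4 = -w1 := by rw [hw1, hw4]; ring
    rw [this, heven, hzero]
  -- distinctness facts come from nonvanishing of denominator factors; deferred
  set g1 : ℂ → ℂ := dslope f w1 with hg1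
  set g2 : ℂ → ℂ := dslope g1 w2 with hg2
  set g3 : ℂ → ℂ := dslope g2 w3 with hg3
  set g4 : ℂ → ℂ := dslope g3 w4 with hg4
  have hds : ∀ (h : ℂ → ℂ) (c : ℂ), Differentiable ℂ h → Differentiable ℂ (dslope h c) := by
    intro h c hh
    rw [← differentiableOn_univ]
    exact (Complex.differentiableOn_dslope (univ_mem)).2 hh.differentiableOn
  have hdg4 : Differentiable ℂ g4 := hds _ _ (hds _ _ (hds _ _ (hds _ _ hd)))
  have hne12 : w2 ≠ w1 := by
    rw [hw1, hw2]; intro h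
    have := congrArg Complex.im h
    simp at this
    exact hb (by linarith)
  have hne13 : w3 ≠ w1 := by
    rw [hw1, hw3]; intro h
    have := congrArg Complex.re h
    simp at this
    exact ha (by linarith)
  have hne14 : w4 ≠ w1 := by
    rw [hw1, hw4]; intro h
    have := congrArg Complex.re h
    simp at this
    exact ha (by linarith)
  have hne23 : w3 ≠ w2 := by
    rw [hw2, hw3]; intro h
    have := congrArg Complex.re h
    simp at this
    exact ha (by linarith)
  have hne24 : w4 ≠ w2 := by
    rw [hw2, hw4]; intro h
    have := congrArg Complex.re h
    simp at this
    exact ha (by linarith)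
  have hne34 : w4 ≠ w3 := by
    rw [hw3, hw4]; intro h
    have := congrArg Complex.im h
    simp at this
    exact hb (by linarith)
  -- vanishing of intermediate functions
  have hg1z : ∀ z, z ≠ w1 → g1 z = f z / (z - w1) := fun z hz => ds_eq hzero hz
  have hg1w2 : g1 w2 = 0 := by rw [hg1z w2 hne12, hz2, zero_div]
  have hg1w3 : g1 w3 = 0 := by rw [hg1z w3 hne13, hz3, zero_div]
  have hg1w4 : g1 w4 = 0 := by rw [hg1z w4 hne14, hz4, zero_div]
  have hg2z : ∀ z, z ≠ w2 → g2 z = g1 z / (z - w2) := fun z hz => ds_eq hg1w2 hz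
  have hg2w3 : g2 w3 = 0 := by rw [hg2z w3 hne23, hg1w3, zero_div]
  have hg2w4 : g2 w4 = 0 := by rw [hg2z w4 hne24, hg1w4, zero_div]
  have hg3z : ∀ z, z ≠ w3 → g3 z = g2 z / (z - w3) := fun z hz => ds_eq hg2w3 hz
  have hg3w4 : g3 w4 = 0 := by rw [hg3z w4 hne34, hg2w4, zero_div]
  have hg4z : ∀ z, z ≠ w4 → g4 z = g3 z / (z - w4) := fun z hz => ds_eq hg3w4 hz
  -- factorization of the denominator
  have hfac1 : ∀ z : ℂ, (z - (a : ℂ)) ^ 2 + (b : ℂ) ^ 2 = (z - w1) * (z - w2) := by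
    intro z; rw [hw1, hw2]; linear_combination (b:ℂ)^2 * Complex.I_sq
  have hfac2 : ∀ z : ℂ, (z + (a : ℂ)) ^ 2 + (b : ℂ) ^ 2 = (z - w3) * (z - w4) := by
    intro z; rw [hw3, hw4]; linear_combination (b:ℂ)^2 * Complex.I_sq
  set c : ℂ := ((a : ℂ) ^ 2 + (b : ℂ) ^ 2) ^ 2 with hc
  have hform : ∀ z : ℂ, ((z - (a : ℂ)) ^ 2 + (b : ℂ) ^ 2) * ((z + (a : ℂ)) ^ 2 + (b : ℂ) ^ 2) ≠ 0 →
      c * g4 z = c * f z /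
        (((z - (a : ℂ)) ^ 2 + (b : ℂ) ^ 2) * ((z + (a : ℂ)) ^ 2 + (b : ℂ) ^ 2)) := by
    intro z hden
    rw [hfac1, hfac2] at hden ⊢
    have h1 : z ≠ w1 := fun h => hden (by rw [h]; ring)
    have h2 : z ≠ w2 := fun h => hden (by rw [h]; ring)
    have h3 : z ≠ w3 := fun h => hden (by rw [h]; ring)
    have h4 : z ≠ w4 := fun h => hden (by rw [h]; ring)
    show c * g4 z = _
    rw [hg4z z h4, hg3z z h3, hg2z z h2, hg1z z h1]
    have e1 : z - w1 ≠ 0 := sub_ne_zero.2 h1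
    have e2 : z - w2 ≠ 0 := sub_ne_zero.2 h2
    have e3 : z - w3 ≠ 0 := sub_ne_zero.2 h3
    have e4 : z - w4 ≠ 0 := sub_ne_zero.2 h4
    rw [div_div, div_div, div_div, mul_div_assoc]
    congr 2
    ring
  refine ⟨fun z => c * g4 z, (differentiable_const c).mul hdg4, hform, ?_⟩
  · intro hab
    have hab2 : a^2 ≤ b^2 := by nlinarith [abs_nonneg a, sq_abs a, sq_abs b]
    have hb2 : 0 < b^2 := pow_two_pos_of_ne_zero hb
    set F : ℝ → ℝ := fun x => (f x).re with hF
    set cr : ℝ := (a^2 + b^2)^2 with hcr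
    set D : ℝ → ℝ := fun x => ((x-a)^2+b^2)*((x+a)^2+b^2) with hD
    have hDpos : ∀ x, 0 < D x := fun x =>
      mul_pos (add_pos_of_nonneg_of_pos (sq_nonneg _) hb2)
        (add_pos_of_nonneg_of_pos (sq_nonneg _) hb2)
    have hcrpos : 0 < cr := pow_pos (by nlinarith [sq_nonneg a]) 2
    have hGre : ∀ x : ℝ, (c * g4 (x:ℂ)).re = (cr / D x) * F x := by
      intro x
      have hden : ((x:ℂ) - (a:ℂ))^2 + (b:ℂ)^2 = (((x-a)^2+b^2 : ℝ) : ℂ) := by push_cast; ring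
      have hden' : ((x:ℂ) + (a:ℂ))^2 + (b:ℂ)^2 = (((x+a)^2+b^2 : ℝ) : ℂ) := by push_cast; ring
      have hne : (((x:ℂ) - (a:ℂ))^2 + (b:ℂ)^2) * (((x:ℂ) + (a:ℂ))^2 + (b:ℂ)^2) ≠ 0 := by
        rw [hden, hden', ← Complex.ofReal_mul, Complex.ofReal_ne_zero]
        exact (hDpos x).ne'
      have := hform (x:ℂ) hne
      rw [this, hden, hden', ← Complex.ofReal_mul]
      have hcc : c = ((cr : ℝ) : ℂ) := by rw [hc, hcr]; push_cast; ring
      rw [hcc, mul_div_assoc, div_eq_mul_inv, ← Complex.ofReal_inv, ← mul_assoc,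
        mul_comm (((cr:ℝ):ℂ)) (f (x:ℂ)), mul_assoc, ← Complex.ofReal_mul]
      rw [Complex.mul_re, Complex.ofReal_re, Complex.ofReal_im]
      show (f (x:ℂ)).re * (cr * (D x)⁻¹) - _ * 0 = cr / D x * F x
      rw [mul_zero, sub_zero, hF, div_eq_mul_inv]
      ring
    have hFcont : Continuous F := Complex.continuous_re.comp (hd.continuous.comp Complex.continuous_ofReal)
    have hDcont : Continuous D := by fun_prop
    have hGcont : Continuous fun x : ℝ => (cr / D x) * F x :=
      ((continuous_const.div hDcont fun x => (hDpos x).ne')).mul hFcont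
    have hGnn : ∀ x : ℝ, 0 ≤ (cr / D x) * F x := fun x =>
      mul_nonneg (div_nonneg hcrpos.le (hDpos x).le) (hpos x)
    have hcD : ∀ x : ℝ, cr ≤ D x := by
      intro x
      show (a^2+b^2)^2 ≤ ((x-a)^2+b^2)*((x+a)^2+b^2)
      nlinarith [sq_nonneg x, mul_nonneg (sq_nonneg x) (sub_nonneg.2 hab2)]
    have hub : ∀ x : ℝ, (cr / D x) * F x ≤ F x := fun x =>
      mul_le_of_le_one_left (hpos x) ((div_le_one (hDpos x)).2 (hcD x))
    have hGint : Integrable fun x : ℝ => (cr / D x) * F x := by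
      refine hint.mono hGcont.aestronglyMeasurable (ae_of_all _ fun x => ?_)
      rw [Real.norm_eq_abs, Real.norm_eq_abs, abs_of_nonneg (hGnn x)]
      exact (hub x).trans (le_abs_self _)
    -- find a small interval where F > 1/2
    have hF0 : F 0 = 1 := by
      rw [hF]; show (f ((0:ℝ):ℂ)).re = 1
      rw [Complex.ofReal_zero, hf0]; rfl
    obtain ⟨δ, hδ, hball⟩ : ∃ δ > 0, Metric.ball (0:ℝ) δ ⊆ {x | 1/2 < F x} := by
      have hopen : IsOpen {x : ℝ | 1/2 < F x} := isOpen_lt continuous_const hFcont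
      have h0mem : (0:ℝ) ∈ {x : ℝ | 1/2 < F x} := by simp [hF0]; norm_num
      exact Metric.isOpen_iff.1 hopen 0 h0mem
    have hkey : 0 < ∫ x : ℝ, (F x - (cr / D x) * F x) := by
      refine (integral_pos_iff_support_of_nonneg
        (fun x => sub_nonneg.2 (hub x)) (hint.sub hGint)).2 ?_
      refine lt_of_lt_of_le ?_ (measure_mono (?_ : Ioo 0 δ ⊆ Function.support _))
      · rw [Real.volume_Ioo]
        exact ENNReal.ofReal_pos.2 (by linarith)
      · intro x hx
        have hx0 : 0 < x := hx.1
        have hxδ : x < δ := hx.2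
        have hFx : 1/2 < F x := hball (by
          rw [Metric.mem_ball, Real.dist_eq, sub_zero, abs_of_pos hx0]; exact hxδ)
        have hlt : cr < D x := by
          show (a^2+b^2)^2 < ((x-a)^2+b^2)*((x+a)^2+b^2)
          nlinarith [mul_pos (mul_pos hx0 hx0) (mul_pos hx0 hx0),
            mul_nonneg (sq_nonneg x) (sub_nonneg.2 hab2)]
        have : (cr / D x) * F x < F x := by
          have := mul_lt_mul_of_pos_right ((div_lt_one (hDpos x)).2 hlt) (by linarith : (0:ℝ) < F x)
          rwa [one_mul] at this
        simp only [Function.mem_support]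
        intro hcontra
        rw [sub_eq_zero] at hcontra
        exact absurd hcontra.symm (ne_of_lt this)
    rw [integral_sub hint hGint] at hkey
    have hre : (∫ x : ℝ, ((fun z => c * g4 z) (x:ℂ)).re) = ∫ x : ℝ, (cr / D x) * F x := by
      congr 1
      ext x
      exact hGre x
    rw [hre]
    rw [hF] at hkey
    linarith
end
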